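/- arXiv:1807.04811 — 11 statements merged into one kernel-verified Lean document; each statement's English description precedes it below -/
import Mathlib

section
/- Let X be a nonempty set and ⊕ : X × X → X a bisymmetric binary operation, i.e. (u ⊕ v) ⊕ (w ⊕ z) = (u ⊕ w) ⊕ (v ⊕ z) for all u, v, w, z ∈ X. Let f, g, h : X → X be bijections such that f(x) ⊕ g(x) = (f ∘ g)(x) and g(x) ⊕ h(x) = (g ∘ h)(x) for all x ∈ X. Then for all x, y ∈ X one has D_{f∘g, g∘h}(D_{f,g}(x,y), D_{g,h}(x,y)) = D_{f∘g, g∘h}(x,y); that is, D_{f∘g,g∘h} is invariant with respect to the mapping (D_{f,g}, D_{g,h}) : X² → X². -/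
/-- `Dop op f g x y = (f ∘ g)⁻¹ (f x ⊕ g y)`, where `⊕ = op` and `(f ∘ g)⁻¹` is the
inverse of the bijection `f ∘ g`. -/
noncomputable def Dop {X : Type*} [Nonempty X] (op : X → X → X) (f g : X → X)
    (x y : X) : X :=
  Function.invFun (f ∘ g) (op (f x) (g y))

/-- Theorem 1: if `⊕` is bisymmetric and the bijections `f, g, h : X → X` satisfy
`f x ⊕ g x = (f ∘ g) x` and `g x ⊕ h x = (g ∘ h) x`, then `D_{f∘g, g∘h}` is invariant
with respect to the mapping `(D_{f,g}, D_{g,h})`. -/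
theorem invariance_identity {X : Type*} [Nonempty X] (op : X → X → X)
    (hbisym : ∀ u v w z : X, op (op u v) (op w z) = op (op u w) (op v z))
    (f g h : X → X)
    (hf : Function.Bijective f) (hg : Function.Bijective g) (hh : Function.Bijective h)
    (hfg : ∀ x : X, op (f x) (g x) = (f ∘ g) x)
    (hgh : ∀ x : X, op (g x) (h x) = (g ∘ h) x) :
    ∀ x y : X,
      Dop op (f ∘ g) (g ∘ h) (Dop op f g x y) (Dop op g h x y)
        = Dop op (f ∘ g) (g ∘ h) x y := by
  intro x y
  have hfg' : Function.Bijective (f ∘ g) := hf.comp hg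
  have hgh' : Function.Bijective (g ∘ h) := hg.comp hh
  have h1 : (f ∘ g) (Dop op f g x y) = op (f x) (g y) :=
    Function.rightInverse_invFun hfg'.2 _
  have h2 : (g ∘ h) (Dop op g h x y) = op (g x) (h y) :=
    Function.rightInverse_invFun hgh'.2 _
  unfold Dop
  rw [Function.rightInverse_invFun hfg'.2, Function.rightInverse_invFun hgh'.2,
    hbisym, hfg, hgh]
end

section
/- Let I ⊆ ℝ be an interval closed under addition and f, g : I → I bijections. If the function D_{f,g}(x,y) = (f∘g)⁻¹(f(x) + g(y)) is symmetric, i.e. D_{f,g}(x,y) = D_{f,g}(y,x) for all x, y ∈ I, then there exists a real constant c such that g(x) = f(x) + c for all x ∈ I. -/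
/-- Remark 3, first part: let `I ⊆ ℝ` be an interval closed under addition and
`f, g : I → I` bijections with `fg_inv` the inverse of `f ∘ g` on `I`.  If
`D_{f,g}(x,y) = (f∘g)⁻¹(f x + g y)` is symmetric on `I`, then `g = f + c` on `I`
for some real constant `c`. -/
theorem symmetric_implies_translate (I : Set ℝ) (hI : I.OrdConnected)
    (hadd : ∀ x ∈ I, ∀ y ∈ I, x + y ∈ I)
    (f g fg_inv : ℝ → ℝ)
    (hf : Set.BijOn f I I) (hg : Set.BijOn g I I)
    (hinv : Set.InvOn fg_inv (f ∘ g) I I)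
    (hsym : ∀ x ∈ I, ∀ y ∈ I, fg_inv (f x + g y) = fg_inv (f y + g x)) :
    ∃ c : ℝ, ∀ x ∈ I, g x = f x + c := by
  rcases Set.eq_empty_or_nonempty I with h | ⟨x0, hx0⟩
  · exact ⟨0, fun x hx => by simp [h] at hx⟩
  · refine ⟨g x0 - f x0, fun x hx => ?_⟩
    have h1 : f x + g x0 ∈ I := hadd _ (hf.mapsTo hx) _ (hg.mapsTo hx0)
    have h2 : f x0 + g x ∈ I := hadd _ (hf.mapsTo hx0) _ (hg.mapsTo hx)
    have hs := hsym x hx x0 hx0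
    have heq : f x + g x0 = f x0 + g x := by
      have := congrArg (f ∘ g) hs
      rwa [hinv.2 h1, hinv.2 h2] at this
    linarith
end

section
/- Let I ⊆ ℝ be an interval closed under addition and f, g : I → I bijections. If the function D_{f,g}(x,y) = (f∘g)⁻¹(f(x) + g(y)) is symmetric (D_{f,g}(x,y) = D_{f,g}(y,x) for all x, y ∈ I) and is a mean on I, then D_{f,g}(x,y) = (x+y)/2 for all x, y ∈ I, i.e. D_{f,g} is the arithmetic mean; moreover f(x) = 2x − c for some constant c ∈ ℝ. -/
/-- Remark 3, second part: let `I ⊆ ℝ` be an interval closed under addition and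
`f, g : I → I` bijections with `fg_inv` the inverse of `f ∘ g` on `I`.  If
`D_{f,g}(x,y) = (f∘g)⁻¹(f x + g y)` is symmetric on `I` and is a mean on `I`, then
`D_{f,g}` is the arithmetic mean, and `f x = 2x - c` on `I` for some constant `c`. -/
theorem symmetric_mean_is_arithmetic (I : Set ℝ) (hI : I.OrdConnected)
    (hadd : ∀ x ∈ I, ∀ y ∈ I, x + y ∈ I)
    (f g fg_inv : ℝ → ℝ)
    (hf : Set.BijOn f I I) (hg : Set.BijOn g I I)
    (hinv : Set.InvOn fg_inv (f ∘ g) I I)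
    (hsym : ∀ x ∈ I, ∀ y ∈ I, fg_inv (f x + g y) = fg_inv (f y + g x))
    (hmean : ∀ x ∈ I, ∀ y ∈ I,
      min x y ≤ fg_inv (f x + g y) ∧ fg_inv (f x + g y) ≤ max x y) :
    (∀ x ∈ I, ∀ y ∈ I, fg_inv (f x + g y) = (x + y) / 2) ∧
      ∃ c : ℝ, ∀ x ∈ I, f x = 2 * x - c := by
  rcases Set.eq_empty_or_nonempty I with hIe | ⟨x0, hx0⟩
  · refine ⟨fun x hx => by simp [hIe] at hx, 0, fun x hx => by simp [hIe] at hx⟩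
  -- diagonal: fg_inv (f x + g x) = x
  have hdiag : ∀ x ∈ I, fg_inv (f x + g x) = x := by
    intro x hx
    have h := hmean x hx x hx
    simp only [min_self, max_self] at h
    linarith [h.1, h.2]
  set d := f x0 - g x0 with hd
  -- f = g + d on I
  have hfg : ∀ x ∈ I, f x = g x + d := by
    intro x hx
    have h1 := hsym x hx x0 hx0
    have ha : f x + g x0 ∈ I := hadd _ (hf.mapsTo hx) _ (hg.mapsTo hx0)
    have hb : f x0 + g x ∈ I := hadd _ (hf.mapsTo hx0) _ (hg.mapsTo hx)
    have h2 := congrArg (f ∘ g) h1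
    rw [hinv.2 ha, hinv.2 hb] at h2
    rw [hd]; linarith
  -- f t = 2 t + d on I
  have hflin : ∀ t ∈ I, f t = 2 * t + d := by
    intro t ht
    obtain ⟨x, hx, hgx⟩ := hg.surjOn ht
    have hw : f x + g x ∈ I := hadd _ (hf.mapsTo hx) _ (hg.mapsTo hx)
    have h2 := hinv.2 hw
    rw [hdiag x hx] at h2
    have : f (g x) = f x + g x := h2
    rw [hgx] at this
    rw [this, hfg x hx, hgx]
    ring
  have hglin : ∀ t ∈ I, g t = 2 * t := by
    intro t ht
    have := hfg t ht
    rw [hflin t ht] at this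
    linarith
  constructor
  · intro x hx y hy
    have hw : f x + g y ∈ I := hadd _ (hf.mapsTo hx) _ (hg.mapsTo hy)
    have hm := hmean x hx y hy
    set m := fg_inv (f x + g y) with hmdef
    have hminI : min x y ∈ I := by rcases min_choice x y with h | h <;> rw [h] <;> assumption
    have hmaxI : max x y ∈ I := by rcases max_choice x y with h | h <;> rw [h] <;> assumption
    have hmI : m ∈ I := hI.out hminI hmaxI ⟨hm.1, hm.2⟩
    have h2 := hinv.2 hw
    have h3 : f (g m) = f x + g y := h2
    rw [hglin m hmI] at h3
    have h2m : (2 : ℝ) * m ∈ I := by have := hg.mapsTo hmI; rwa [hglin m hmI] at this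
    rw [hflin _ h2m, hflin x hx, hglin y hy] at h3
    linarith
  · exact ⟨-d, fun x hx => by rw [hflin x hx]; ring⟩
end

section
/- Let g : (0,∞) → (0,∞) be bijective, continuous and such that g(x) > x for all x > 0. Then the following are equivalent: (ii) there exists a continuous function f : (0,∞) → (0,∞) satisfying f(g(x)) = f(x) + g(x) for all x ∈ (0,∞); (iii) there exist a function f : (0,∞) → (0,∞) and a constant c ≥ 0 such that for every x ∈ (0,∞) the series Σ_{k=0}^∞ g^{-k}(x) converges and f(x) = c + Σ_{k=0}^∞ g^{-k}(x). -/
/-- Proposition 2: let `g : (0,∞) → (0,∞)` be bijective, continuous with `g x > x` for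
all `x > 0`, and let `g_inv` be its inverse on `(0,∞)`.  Then there is a continuous
`f : (0,∞) → (0,∞)` with `f (g x) = f x + g x` for all `x > 0` iff there are a function
`f : (0,∞) → (0,∞)` and a constant `c ≥ 0` such that for all `x > 0` the series
`Σ_{k=0}^∞ g⁻ᵏ(x)` of iterates of `g⁻¹` converges and `f x = c + Σ_{k=0}^∞ g⁻ᵏ(x)`. -/
theorem reflexive_partner_iff_series (g g_inv : ℝ → ℝ)
    (hg_bij : Set.BijOn g (Set.Ioi 0) (Set.Ioi 0))
    (hg_cont : ContinuousOn g (Set.Ioi 0))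
    (hg_inv : Set.InvOn g_inv g (Set.Ioi 0) (Set.Ioi 0))
    (hg_gt : ∀ x ∈ Set.Ioi (0 : ℝ), g x > x) :
    (∃ f : ℝ → ℝ, ContinuousOn f (Set.Ioi 0) ∧
        (∀ x ∈ Set.Ioi (0 : ℝ), 0 < f x) ∧
        (∀ x ∈ Set.Ioi (0 : ℝ), f (g x) = f x + g x)) ↔
      (∃ f : ℝ → ℝ, ∃ c : ℝ, 0 ≤ c ∧
        (∀ x ∈ Set.Ioi (0 : ℝ), 0 < f x) ∧
        (∀ x ∈ Set.Ioi (0 : ℝ),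
          Summable (fun k : ℕ => g_inv^[k] x) ∧
            f x = c + ∑' k : ℕ, g_inv^[k] x)) := by
  -- g_inv maps (0,∞) into itself
  have hmaps : ∀ x ∈ Set.Ioi (0:ℝ), g_inv x ∈ Set.Ioi (0:ℝ) := by
    intro x hx
    obtain ⟨y, hy, hgy⟩ := hg_bij.surjOn hx
    rw [← hgy, hg_inv.1 hy]; exact hy
  -- iterates of g_inv stay in (0,∞)
  have hiter_mem : ∀ n : ℕ, ∀ x ∈ Set.Ioi (0:ℝ), g_inv^[n] x ∈ Set.Ioi (0:ℝ) := by
    intro n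
    induction n with
    | zero => intro x hx; simpa using hx
    | succ n ih =>
      intro x hx
      rw [Function.iterate_succ_apply']
      exact hmaps _ (ih x hx)
  constructor
  · -- forward direction
    rintro ⟨f, _, fpos, feq⟩
    -- partial sums identity
    have key : ∀ x ∈ Set.Ioi (0:ℝ), ∀ n : ℕ,
        (∑ k ∈ Finset.range n, g_inv^[k] x) + f (g_inv^[n] x) = f x := by
      intro x hx n
      induction n with
      | zero => simp
      | succ n ih =>
        have hy : g_inv^[n] x ∈ Set.Ioi (0:ℝ) := hiter_mem n x hx
        have hz : g_inv (g_inv^[n] x) ∈ Set.Ioi (0:ℝ) := hmaps _ hy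
        have hfz := feq _ hz
        rw [hg_inv.2 hy] at hfz
        rw [Finset.sum_range_succ, Function.iterate_succ_apply']
        rw [← ih, hfz]; ring
    have hsum : ∀ x ∈ Set.Ioi (0:ℝ), Summable (fun k : ℕ => g_inv^[k] x) := by
      intro x hx
      apply summable_of_sum_range_le (c := f x)
        (fun k => le_of_lt (hiter_mem k x hx))
      intro n
      have := key x hx n
      nlinarith [fpos _ (hiter_mem n x hx)]
    refine ⟨fun x => ∑' k : ℕ, g_inv^[k] x, 0, le_refl 0, ?_, ?_⟩
    · intro x hx
      have h0 : (g_inv^[0] x) ≤ ∑' k : ℕ, g_inv^[k] x :=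
        Summable.le_tsum (hsum x hx) 0 (fun i _ => le_of_lt (hiter_mem i x hx))
      simp only [Function.iterate_zero, id_eq] at h0
      exact lt_of_lt_of_le hx h0
    · intro x hx
      exact ⟨hsum x hx, by rw [zero_add]⟩
  · -- backward direction
    rintro ⟨f, c, _, _, hkey⟩
    -- g is strictly monotone on (0,∞)
    have gmono : StrictMonoOn g (Set.Ioi 0) := by
      intro x hx y hy hxy
      set b := max (g x) y + 1 with hb
      have hxb : x ∈ Set.Ioo (0:ℝ) b := by
        constructor
        · exact hx
        · calc x < y := hxy
            _ ≤ max (g x) y := le_max_right _ _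
            _ < b := lt_add_one _
      have hyb : y ∈ Set.Ioo (0:ℝ) b := by
        refine ⟨hy, ?_⟩
        calc y ≤ max (g x) y := le_max_right _ _
          _ < b := lt_add_one _
      have hsub : Set.Ioo (0:ℝ) b ⊆ Set.Ioi 0 := Set.Ioo_subset_Ioi_self
      have hmono := ContinuousOn.strictMonoOn_of_injOn_Ioo (lt_trans hx hxb.2)
        (hg_cont.mono hsub) (hg_bij.injOn.mono hsub)
      rcases hmono with h | h
      · exact h hxb hyb hxy
      · exfalso
        set z := max (g x) y with hz
        have hzb : z ∈ Set.Ioo (0:ℝ) b := by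
          constructor
          · exact lt_of_lt_of_le hy (le_max_right _ _)
          · exact lt_add_one _
        have hxz : x < z := lt_of_lt_of_le hxy (le_max_right _ _)
        have h1 : g z < g x := h hxb hzb hxz
        have h2 : g z > z := hg_gt z (hsub hzb)
        have h3 : g x ≤ z := le_max_left _ _
        linarith
    -- g_inv is monotone on (0,∞)
    have ginv_mono : ∀ a ∈ Set.Ioi (0:ℝ), ∀ b ∈ Set.Ioi (0:ℝ), a ≤ b →
        g_inv a ≤ g_inv b := by
      intro a ha b hb hab
      by_contra h
      push_neg at h
      have := gmono (hmaps b hb) (hmaps a ha) h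
      rw [hg_inv.2 ha, hg_inv.2 hb] at this
      linarith
    have hiter_mono : ∀ n : ℕ, ∀ a ∈ Set.Ioi (0:ℝ), ∀ b ∈ Set.Ioi (0:ℝ), a ≤ b →
        g_inv^[n] a ≤ g_inv^[n] b := by
      intro n
      induction n with
      | zero => intro a _ b _ hab; simpa using hab
      | succ n ih =>
        intro a ha b hb hab
        rw [Function.iterate_succ_apply', Function.iterate_succ_apply']
        exact ginv_mono _ (hiter_mem n a ha) _ (hiter_mem n b hb) (ih a ha b hb hab)
    -- g_inv is continuous on (0,∞)
    have ginv_image : g_inv '' Set.Ioi 0 = Set.Ioi 0 := by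
      apply Set.Subset.antisymm
      · rintro _ ⟨y, hy, rfl⟩; exact hmaps y hy
      · intro x hx
        exact ⟨g x, hg_bij.mapsTo hx, hg_inv.1 hx⟩
    have ginv_smono : StrictMonoOn g_inv (Set.Ioi 0) := by
      intro a ha b hb hab
      rcases lt_or_eq_of_le (ginv_mono a ha b hb (le_of_lt hab)) with h | h
      · exact h
      · exfalso
        have : a = b := by
          have := congrArg g h
          rwa [hg_inv.2 ha, hg_inv.2 hb] at this
        exact absurd this (ne_of_lt hab)
    have ginv_cont : ContinuousOn g_inv (Set.Ioi 0) := by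
      intro x hx
      apply ContinuousAt.continuousWithinAt
      apply ginv_smono.continuousAt_of_image_mem_nhds
        (Ioi_mem_nhds hx)
      rw [ginv_image]
      exact Ioi_mem_nhds (hmaps x hx)
    have hiter_cont : ∀ n : ℕ, ContinuousOn (g_inv^[n]) (Set.Ioi 0) := by
      intro n
      induction n with
      | zero => simpa using continuousOn_id
      | succ n ih =>
        rw [Function.iterate_succ']
        exact ginv_cont.comp ih (fun x hx => hiter_mem n x hx)
    refine ⟨fun x => ∑' k : ℕ, g_inv^[k] x, ?_, ?_, ?_⟩
    · -- continuity of the sum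
      intro x hx
      apply ContinuousAt.continuousWithinAt
      have hx1 : x + 1 ∈ Set.Ioi (0:ℝ) := by
        simp only [Set.mem_Ioi] at hx ⊢; linarith
      have hsub : Set.Ioo (0:ℝ) (x+1) ⊆ Set.Ioi 0 := Set.Ioo_subset_Ioi_self
      have hco : ContinuousOn (fun y => ∑' k : ℕ, g_inv^[k] y) (Set.Ioo 0 (x+1)) := by
        apply continuousOn_tsum (u := fun k => g_inv^[k] (x+1))
          (fun k => (hiter_cont k).mono hsub) (hkey (x+1) hx1).1
        intro n y hy
        rw [Real.norm_of_nonneg (le_of_lt (hiter_mem n y (hsub hy)))]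
        exact hiter_mono n y (hsub hy) (x+1) hx1 (le_of_lt hy.2)
      exact hco.continuousAt (Ioo_mem_nhds hx (lt_add_one x))
    · -- positivity
      intro x hx
      have h0 : (g_inv^[0] x) ≤ ∑' k : ℕ, g_inv^[k] x :=
        Summable.le_tsum (hkey x hx).1 0 (fun i _ => le_of_lt (hiter_mem i x hx))
      simp only [Function.iterate_zero, id_eq] at h0
      exact lt_of_lt_of_le hx h0
    · -- functional equation
      intro x hx
      have hgx : g x ∈ Set.Ioi (0:ℝ) := hg_bij.mapsTo hx
      have hs := (hkey (g x) hgx).1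
      have h1 : ∑' k : ℕ, g_inv^[k] (g x)
          = g_inv^[0] (g x) + ∑' k : ℕ, g_inv^[k+1] (g x) := Summable.tsum_eq_zero_add hs
      have h2 : ∀ k : ℕ, g_inv^[k+1] (g x) = g_inv^[k] x := by
        intro k
        rw [Function.iterate_succ_apply, hg_inv.1 hx]
      simp only [Function.iterate_zero, id_eq] at h1
      show (∑' k : ℕ, g_inv^[k] (g x)) = (∑' k : ℕ, g_inv^[k] x) + g x
      rw [h1, tsum_congr h2]
      ring
end

section
/- Let f, g : (0,∞) → (0,∞) be continuous, strictly increasing bijections of (0,∞) onto itself. Then the function D_{f,g}(x,y) = (f∘g)⁻¹(f(x) + g(y)) is reflexive (i.e. D_{f,g}(x,x) = x for all x > 0) if and only if the series Σ_{k=0}^∞ g^{-k}(x) of iterates of g⁻¹ converges uniformly on compact subsets of (0,∞) and f(x) = Σ_{k=0}^∞ g^{-k}(x) for all x > 0. -/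
open Filter

/-- Theorem 2, equivalence (ii) ⟺ (iii): for continuous strictly increasing bijections
`f, g` of `(0,∞)` onto itself (with inverses `f_inv`, `g_inv` on `(0,∞)`), the operation
`D_{f,g}(x,y) = (f∘g)⁻¹(f x + g y) = g⁻¹(f⁻¹(f x + g y))` is reflexive iff the series
`Σ_{k=0}^∞ g⁻ᵏ` of iterates of `g⁻¹` converges uniformly on compact subsets of `(0,∞)`
and `f = Σ_{k=0}^∞ g⁻ᵏ`. -/
theorem reflexive_iff_iterate_series (f g f_inv g_inv : ℝ → ℝ)
    (hf_cont : ContinuousOn f (Set.Ioi 0)) (hf_mono : StrictMonoOn f (Set.Ioi 0))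
    (hf_bij : Set.BijOn f (Set.Ioi 0) (Set.Ioi 0))
    (hg_cont : ContinuousOn g (Set.Ioi 0)) (hg_mono : StrictMonoOn g (Set.Ioi 0))
    (hg_bij : Set.BijOn g (Set.Ioi 0) (Set.Ioi 0))
    (hf_inv : Set.InvOn f_inv f (Set.Ioi 0) (Set.Ioi 0))
    (hg_inv : Set.InvOn g_inv g (Set.Ioi 0) (Set.Ioi 0)) :
    (∀ x ∈ Set.Ioi (0 : ℝ), g_inv (f_inv (f x + g x)) = x) ↔
      ((∀ x ∈ Set.Ioi (0 : ℝ), Summable (fun k : ℕ => g_inv^[k] x)) ∧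
        (∀ K : Set ℝ, K ⊆ Set.Ioi 0 → IsCompact K →
          TendstoUniformlyOn (fun n x => ∑ k ∈ Finset.range n, g_inv^[k] x)
            (fun x => ∑' k : ℕ, g_inv^[k] x) atTop K) ∧
        (∀ x ∈ Set.Ioi (0 : ℝ), f x = ∑' k : ℕ, g_inv^[k] x)) := by
  have hgmem : ∀ x ∈ Set.Ioi (0:ℝ), g x ∈ Set.Ioi (0:ℝ) := fun x hx => hg_bij.mapsTo hx
  have hfmem : ∀ x ∈ Set.Ioi (0:ℝ), f x ∈ Set.Ioi (0:ℝ) := fun x hx => hf_bij.mapsTo hx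
  have hginvmem : ∀ x ∈ Set.Ioi (0:ℝ), g_inv x ∈ Set.Ioi (0:ℝ) := by
    intro x hx
    obtain ⟨y, hy, rfl⟩ := hg_bij.surjOn hx
    rw [hg_inv.1 hy]; exact hy
  have hitermem : ∀ (n : ℕ), ∀ x ∈ Set.Ioi (0:ℝ), g_inv^[n] x ∈ Set.Ioi (0:ℝ) := by
    intro n
    induction n with
    | zero => intro x hx; simpa using hx
    | succ n ih =>
      intro x hx
      rw [Function.iterate_succ_apply]
      exact ih _ (hginvmem x hx)
  have fpos : ∀ x ∈ Set.Ioi (0:ℝ), 0 < f x := fun x hx => Set.mem_Ioi.mp (hfmem x hx)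
  -- reflexivity is equivalent to the functional equation f (g x) = f x + g x
  have key : (∀ x ∈ Set.Ioi (0:ℝ), g_inv (f_inv (f x + g x)) = x) ↔
      (∀ x ∈ Set.Ioi (0:ℝ), f (g x) = f x + g x) := by
    constructor
    · intro h x hx
      have hfx := Set.mem_Ioi.mp (hfmem x hx)
      have hgx := Set.mem_Ioi.mp (hgmem x hx)
      have hs : f x + g x ∈ Set.Ioi (0:ℝ) := Set.mem_Ioi.mpr (by linarith)
      obtain ⟨v, hv, hfv⟩ := hf_bij.surjOn hs
      have hu : f_inv (f x + g x) = v := by rw [← hfv, hf_inv.1 hv]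
      have hgi : g_inv v = x := by rw [← hu]; exact h x hx
      have hgxv : g x = v := by rw [← hgi]; exact hg_inv.2 hv
      rw [congrArg f hgxv, hfv]
    · intro h x hx
      have hgx := hgmem x hx
      rw [← h x hx, hf_inv.1 hgx, hg_inv.1 hx]
  rw [key]
  constructor
  · intro feq
    -- f x = x + f (g_inv x)
    have F : ∀ x ∈ Set.Ioi (0:ℝ), f x = x + f (g_inv x) := by
      intro x hx
      have h1 := hginvmem x hx
      have h2 := feq (g_inv x) h1
      rw [hg_inv.2 hx] at h2
      linarith
    have Fn : ∀ x ∈ Set.Ioi (0:ℝ), ∀ n : ℕ,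
        f x = ∑ k ∈ Finset.range n, g_inv^[k] x + f (g_inv^[n] x) := by
      intro x hx n
      induction n with
      | zero => simp
      | succ n ih =>
        rw [Finset.sum_range_succ, Function.iterate_succ_apply']
        have h2 := F (g_inv^[n] x) (hitermem n x hx)
        linarith
    have hsum : ∀ x ∈ Set.Ioi (0:ℝ), Summable fun k : ℕ => g_inv^[k] x := by
      intro x hx
      apply summable_of_sum_range_le (c := f x)
      · intro k; exact le_of_lt (Set.mem_Ioi.mp (hitermem k x hx))
      · intro n
        have h1 := Fn x hx n
        have h2 := fpos _ (hitermem n x hx)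
        linarith
    have hsmall : ∀ ε > (0:ℝ), ∃ δ > (0:ℝ), ∀ y, 0 < y → y < δ → f y < ε := by
      intro ε hε
      obtain ⟨y₀, hy₀, hfy₀⟩ := hf_bij.surjOn (show ε/2 ∈ Set.Ioi (0:ℝ) from
        Set.mem_Ioi.mpr (half_pos hε))
      refine ⟨y₀, Set.mem_Ioi.mp hy₀, fun y hy hylt => ?_⟩
      have := hf_mono (Set.mem_Ioi.mpr hy) hy₀ hylt
      rw [hfy₀] at this
      linarith
    have htend : ∀ x ∈ Set.Ioi (0:ℝ),
        Tendsto (fun n => f (g_inv^[n] x)) atTop (nhds 0) := by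
      intro x hx
      rw [Metric.tendsto_atTop]
      intro ε hε
      obtain ⟨δ, hδ, hδf⟩ := hsmall ε hε
      have h0 := (hsum x hx).tendsto_atTop_zero
      rw [Metric.tendsto_atTop] at h0
      obtain ⟨N, hN⟩ := h0 δ hδ
      refine ⟨N, fun n hn => ?_⟩
      have h1 := hN n hn
      have hpos := Set.mem_Ioi.mp (hitermem n x hx)
      rw [Real.dist_eq, sub_zero, abs_of_pos hpos] at h1
      rw [Real.dist_eq, sub_zero, abs_of_pos (fpos _ (hitermem n x hx))]
      exact hδf _ hpos h1
    have hts : ∀ x ∈ Set.Ioi (0:ℝ), f x = ∑' k : ℕ, g_inv^[k] x := by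
      intro x hx
      have hHS : HasSum (fun k : ℕ => g_inv^[k] x) (f x) := by
        rw [(hsum x hx).hasSum_iff_tendsto_nat]
        have heq : (fun n => ∑ k ∈ Finset.range n, g_inv^[k] x)
            = fun n => f x - f (g_inv^[n] x) := by
          funext n
          have := Fn x hx n
          linarith
        rw [heq]
        simpa using tendsto_const_nhds.sub (htend x hx)
      exact hHS.tsum_eq.symm
    -- monotonicity of iterates of g_inv on (0,∞)
    have hgimono : ∀ x ∈ Set.Ioi (0:ℝ), ∀ y ∈ Set.Ioi (0:ℝ), x ≤ y → g_inv x ≤ g_inv y := by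
      intro x hx y hy hxy
      have h1 := hginvmem x hx
      have h2 := hginvmem y hy
      by_contra h
      push_neg at h
      have h3 := hg_mono h2 h1 h
      rw [hg_inv.2 hx, hg_inv.2 hy] at h3
      linarith
    have hitmono : ∀ n : ℕ, ∀ x ∈ Set.Ioi (0:ℝ), ∀ y ∈ Set.Ioi (0:ℝ), x ≤ y →
        g_inv^[n] x ≤ g_inv^[n] y := by
      intro n
      induction n with
      | zero => intro x _ y _ h; simpa using h
      | succ n ih =>
        intro x hx y hy h
        rw [Function.iterate_succ_apply, Function.iterate_succ_apply]
        exact ih _ (hginvmem x hx) _ (hginvmem y hy) (hgimono x hx y hy h)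
    refine ⟨hsum, ?_, hts⟩
    intro K hK hKc
    rcases K.eq_empty_or_nonempty with rfl | hne
    · exact tendstoUniformlyOn_empty
    obtain ⟨b, hbK, hbub⟩ := hKc.exists_isGreatest hne
    have hb : b ∈ Set.Ioi (0:ℝ) := hK hbK
    rw [Metric.tendstoUniformlyOn_iff]
    intro ε hε
    have h0 := htend b hb
    rw [Metric.tendsto_atTop] at h0
    obtain ⟨N, hN⟩ := h0 ε hε
    rw [eventually_atTop]
    refine ⟨N, fun n hn x hx => ?_⟩
    have hxI : x ∈ Set.Ioi (0:ℝ) := hK hx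
    have hle : g_inv^[n] x ≤ g_inv^[n] b := hitmono n x hxI b hb (hbub hx)
    have hfle : f (g_inv^[n] x) ≤ f (g_inv^[n] b) :=
      hf_mono.monotoneOn (hitermem n x hxI) (hitermem n b hb) hle
    have h1 := hN n hn
    rw [Real.dist_eq, sub_zero, abs_of_pos (fpos _ (hitermem n b hb))] at h1
    rw [Real.dist_eq]
    have h2 : (∑' k : ℕ, g_inv^[k] x) - ∑ k ∈ Finset.range n, g_inv^[k] x
        = f (g_inv^[n] x) := by
      rw [← hts x hxI]
      have := Fn x hxI n
      linarith
    rw [h2, abs_of_pos (fpos _ (hitermem n x hxI))]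
    linarith
  · rintro ⟨hsum, -, hts⟩ x hx
    have hgx := hgmem x hx
    rw [hts (g x) hgx, Summable.tsum_eq_zero_add (hsum (g x) hgx)]
    have hshift : ∀ k : ℕ, g_inv^[k+1] (g x) = g_inv^[k] x := by
      intro k
      rw [Function.iterate_succ_apply, hg_inv.1 hx]
    rw [tsum_congr hshift, ← hts x hx, Function.iterate_zero_apply]
    ring
end

section
/- Let g : (0,∞) → (0,∞) be a continuous, strictly increasing bijection of (0,∞) onto itself such that the series Σ_{k=0}^∞ g^{-k}(x) of iterates of g⁻¹ converges for every x > 0 and its sum f(x) := Σ_{k=0}^∞ g^{-k}(x) defines a bijection f of (0,∞) onto itself. Then D_{f,g}(x,y) = (f∘g)⁻¹(f(x) + g(y)) is a strict mean on (0,∞) that is strictly increasing in each variable; equivalently, the function 𝒟_g(x,y) = (Σ_{k=0}^∞ g^{-k+1})⁻¹(Σ_{k=0}^∞ g^{-k}(x) + g(y)) is a strict mean on (0,∞), where Σ_{k=0}^∞ g^{-k+1} = f∘g. -/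
/-- Theorem 2, (iii) ⟹ (i): let `g` be a continuous, strictly increasing bijection of
`(0,∞)` onto itself (with inverse `g_inv`) such that the series `Σ_{k=0}^∞ g⁻ᵏ(x)` of
iterates of `g⁻¹` converges for every `x > 0`, and suppose its sum
`f x = Σ_{k=0}^∞ g⁻ᵏ(x)` defines a bijection `f` of `(0,∞)` onto itself (with inverse
`f_inv`).  Then `D_{f,g}(x,y) = (f∘g)⁻¹(f x + g y) = g⁻¹(f⁻¹(f x + g y))` is a strict
mean on `(0,∞)` that is strictly increasing in each variable. -/
theorem iterative_mean_is_strict_mean (g g_inv f f_inv : ℝ → ℝ)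
    (hg_cont : ContinuousOn g (Set.Ioi 0)) (hg_mono : StrictMonoOn g (Set.Ioi 0))
    (hg_bij : Set.BijOn g (Set.Ioi 0) (Set.Ioi 0))
    (hg_inv : Set.InvOn g_inv g (Set.Ioi 0) (Set.Ioi 0))
    (hf_sum : ∀ x ∈ Set.Ioi (0 : ℝ), HasSum (fun k : ℕ => g_inv^[k] x) (f x))
    (hf_bij : Set.BijOn f (Set.Ioi 0) (Set.Ioi 0))
    (hf_inv : Set.InvOn f_inv f (Set.Ioi 0) (Set.Ioi 0)) :
    (∀ x ∈ Set.Ioi (0 : ℝ), ∀ y ∈ Set.Ioi (0 : ℝ),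
      (min x y ≤ g_inv (f_inv (f x + g y)) ∧ g_inv (f_inv (f x + g y)) ≤ max x y) ∧
        (x ≠ y →
          min x y < g_inv (f_inv (f x + g y)) ∧ g_inv (f_inv (f x + g y)) < max x y)) ∧
    (∀ y ∈ Set.Ioi (0 : ℝ),
      StrictMonoOn (fun x => g_inv (f_inv (f x + g y))) (Set.Ioi 0)) ∧
    (∀ x ∈ Set.Ioi (0 : ℝ),
      StrictMonoOn (fun y => g_inv (f_inv (f x + g y))) (Set.Ioi 0)) := by
  have hginv_maps : ∀ s ∈ Set.Ioi (0:ℝ), g_inv s ∈ Set.Ioi (0:ℝ) := by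
    intro s hs
    obtain ⟨u, hu, rfl⟩ := hg_bij.surjOn hs
    rw [hg_inv.1 hu]; exact hu
  have hfinv_maps : ∀ s ∈ Set.Ioi (0:ℝ), f_inv s ∈ Set.Ioi (0:ℝ) := by
    intro s hs
    obtain ⟨u, hu, rfl⟩ := hf_bij.surjOn hs
    rw [hf_inv.1 hu]; exact hu
  have hginv_mono : ∀ a ∈ Set.Ioi (0:ℝ), ∀ b ∈ Set.Ioi (0:ℝ), a < b → g_inv a < g_inv b := by
    intro a ha b hb hab
    obtain ⟨u, hu, rfl⟩ := hg_bij.surjOn ha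
    obtain ⟨v, hv, rfl⟩ := hg_bij.surjOn hb
    rw [hg_inv.1 hu, hg_inv.1 hv]
    by_contra h
    push_neg at h
    exact absurd (hg_mono.monotoneOn hv hu h) (not_le.2 hab)
  have hiter_maps : ∀ k : ℕ, ∀ s ∈ Set.Ioi (0:ℝ), g_inv^[k] s ∈ Set.Ioi (0:ℝ) := by
    intro k
    induction k with
    | zero => intro s hs; simpa using hs
    | succ k ih =>
      intro s hs
      rw [Function.iterate_succ_apply]
      exact ih _ (hginv_maps s hs)
  have hiter_mono : ∀ k : ℕ, ∀ a ∈ Set.Ioi (0:ℝ), ∀ b ∈ Set.Ioi (0:ℝ), a < b →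
      g_inv^[k] a < g_inv^[k] b := by
    intro k
    induction k with
    | zero => intro a _ b _ hab; simpa using hab
    | succ k ih =>
      intro a ha b hb hab
      rw [Function.iterate_succ_apply, Function.iterate_succ_apply]
      exact ih _ (hginv_maps a ha) _ (hginv_maps b hb) (hginv_mono a ha b hb hab)
  have hf_mono : ∀ a ∈ Set.Ioi (0:ℝ), ∀ b ∈ Set.Ioi (0:ℝ), a < b → f a < f b := by
    intro a ha b hb hab
    exact hasSum_lt (i := 0) (fun k => (hiter_mono k a ha b hb hab).le)
      (by simpa using hab) (hf_sum a ha) (hf_sum b hb)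
  have hf_mono_le : ∀ a ∈ Set.Ioi (0:ℝ), ∀ b ∈ Set.Ioi (0:ℝ), a ≤ b → f a ≤ f b := by
    intro a ha b hb hab
    rcases eq_or_lt_of_le hab with rfl | h
    · exact le_refl _
    · exact (hf_mono a ha b hb h).le
  have hkey : ∀ t ∈ Set.Ioi (0:ℝ), f (g t) = g t + f t := by
    intro t ht
    have h1 : HasSum (fun k : ℕ => g_inv^[k + 1] (g t)) (f t) := by
      have he : (fun k : ℕ => g_inv^[k + 1] (g t)) = fun k : ℕ => g_inv^[k] t := by
        funext k
        rw [Function.iterate_succ_apply, hg_inv.1 ht]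
      rw [he]; exact hf_sum t ht
    have h2 := (hasSum_nat_add_iff (f := fun k : ℕ => g_inv^[k] (g t)) 1).mp h1
    simp only [Finset.range_one, Finset.sum_singleton, Function.iterate_zero_apply] at h2
    have h3 := hf_sum (g t) (hg_bij.mapsTo ht)
    have h4 := h3.unique h2
    linarith
  -- the key: t := g_inv (f_inv (f x + g y)) is in Ioi 0 and f t + g t = f x + g y
  have hT : ∀ x ∈ Set.Ioi (0:ℝ), ∀ y ∈ Set.Ioi (0:ℝ),
      g_inv (f_inv (f x + g y)) ∈ Set.Ioi (0:ℝ) ∧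
      f (g_inv (f_inv (f x + g y))) + g (g_inv (f_inv (f x + g y))) = f x + g y := by
    intro x hx y hy
    have hfx : f x ∈ Set.Ioi (0:ℝ) := hf_bij.mapsTo hx
    have hgy : g y ∈ Set.Ioi (0:ℝ) := hg_bij.mapsTo hy
    have hs : f x + g y ∈ Set.Ioi (0:ℝ) := by
      simp only [Set.mem_Ioi] at *
      linarith
    have hfs : f_inv (f x + g y) ∈ Set.Ioi (0:ℝ) := hfinv_maps _ hs
    have ht : g_inv (f_inv (f x + g y)) ∈ Set.Ioi (0:ℝ) := hginv_maps _ hfs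
    refine ⟨ht, ?_⟩
    have hgt : g (g_inv (f_inv (f x + g y))) = f_inv (f x + g y) := hg_inv.2 hfs
    have hk := hkey _ ht
    rw [hgt] at hk ⊢
    rw [hf_inv.2 hs] at hk
    linarith
  -- the comparison function h t = f t + g t is strictly monotone on Ioi 0
  have hh_mono : ∀ a ∈ Set.Ioi (0:ℝ), ∀ b ∈ Set.Ioi (0:ℝ), a < b → f a + g a < f b + g b := by
    intro a ha b hb hab
    exact add_lt_add (hf_mono a ha b hb hab) (hg_mono ha hb hab)
  have hh_reflect : ∀ a ∈ Set.Ioi (0:ℝ), ∀ b ∈ Set.Ioi (0:ℝ),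
      f a + g a < f b + g b → a < b := by
    intro a ha b hb hlt
    by_contra h
    push_neg at h
    rcases eq_or_lt_of_le h with rfl | h'
    · exact lt_irrefl _ hlt
    · exact absurd (hh_mono b hb a ha h') (not_lt.2 hlt.le)
  have hh_reflect_le : ∀ a ∈ Set.Ioi (0:ℝ), ∀ b ∈ Set.Ioi (0:ℝ),
      f a + g a ≤ f b + g b → a ≤ b := by
    intro a ha b hb hle
    by_contra h
    push_neg at h
    exact absurd (hh_mono b hb a ha h) (not_lt.2 hle)
  refine ⟨?_, ?_, ?_⟩
  · intro x hx y hy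
    obtain ⟨ht, heq⟩ := hT x hx y hy
    set t := g_inv (f_inv (f x + g y)) with hre
    have hmin : min x y ∈ Set.Ioi (0:ℝ) := by
      simp only [Set.mem_Ioi, lt_min_iff] at *
      exact ⟨hx, hy⟩
    have hmax : max x y ∈ Set.Ioi (0:ℝ) := by
      simp only [Set.mem_Ioi, lt_max_iff] at *
      exact Or.inl hx
    constructor
    · constructor
      · refine hh_reflect_le _ hmin _ ht ?_
        rw [heq]
        have h1 : f (min x y) ≤ f x := hf_mono_le _ hmin _ hx (min_le_left x y)
        have h2 : g (min x y) ≤ g y := by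
          rcases eq_or_lt_of_le (min_le_right x y) with h | h
          · exact le_of_eq (congrArg g h)
          · exact (hg_mono hmin hy h).le
        linarith
      · refine hh_reflect_le _ ht _ hmax ?_
        rw [heq]
        have h1 : f x ≤ f (max x y) := hf_mono_le _ hx _ hmax (le_max_left x y)
        have h2 : g y ≤ g (max x y) := by
          rcases eq_or_lt_of_le (le_max_right x y) with h | h
          · exact le_of_eq (congrArg g h)
          · exact (hg_mono hy hmax h).le
        linarith
    · intro hne
      have hstrict : f (min x y) + g (min x y) < f x + g y := by
        rcases lt_or_gt_of_ne hne with h | h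
        · have hmx : min x y = x := min_eq_left h.le
          have hg' : g x < g y := hg_mono hx hy h
          rw [hmx]
          linarith
        · have hmy : min x y = y := min_eq_right h.le
          have hf' : f y < f x := hf_mono _ hy _ hx h
          rw [hmy]
          linarith
      have hstrict' : f x + g y < f (max x y) + g (max x y) := by
        rcases lt_or_gt_of_ne hne with h | h
        · have hmx : max x y = y := max_eq_right h.le
          have hf' : f x < f y := hf_mono _ hx _ hy h
          rw [hmx]
          linarith
        · have hmy : max x y = x := max_eq_left h.le
          have hg' : g y < g x := hg_mono hy hx h
          rw [hmy]
          linarith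
      constructor
      · exact hh_reflect _ hmin _ ht (by rw [heq]; exact hstrict)
      · exact hh_reflect _ ht _ hmax (by rw [heq]; exact hstrict')
  · intro y hy x1 hx1 x2 hx2 h12
    obtain ⟨ht1, heq1⟩ := hT x1 hx1 y hy
    obtain ⟨ht2, heq2⟩ := hT x2 hx2 y hy
    refine hh_reflect _ ht1 _ ht2 ?_
    rw [heq1, heq2]
    have := hf_mono _ hx1 _ hx2 h12
    linarith
  · intro x hx y1 hy1 y2 hy2 h12
    obtain ⟨ht1, heq1⟩ := hT x hx y1 hy1
    obtain ⟨ht2, heq2⟩ := hT x hx y2 hy2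
    refine hh_reflect _ ht1 _ ht2 ?_
    rw [heq1, heq2]
    have := hg_mono hy1 hy2 h12
    linarith
end

section
/- Let r : (0,∞) → (0,∞) be a continuous, strictly increasing bijection of (0,∞) onto itself such that 0 < r(x) < x for all x > 0 and the series Σ_{k=0}^∞ r^k(x) of iterates of r converges for every x > 0 to a finite continuous function. Then the function 𝒟_r : (0,∞)² → (0,∞) defined by 𝒟_r(x,y) = (Σ_{k=0}^∞ r^{k-1})⁻¹(Σ_{k=0}^∞ r^k(x) + r⁻¹(y)) is a strict mean on (0,∞). -/
/-- Corollary 1: let `r` be a continuous, strictly increasing bijection of `(0,∞)` onto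
itself (with inverse `r_inv`) such that `0 < r x < x` for all `x > 0` and the series
`Σ_{k=0}^∞ rᵏ(x)` of iterates of `r` converges to a finite continuous function `F`.
Then the iterative mean
`𝒟_r(x,y) = (Σ_{k=0}^∞ r^{k-1})⁻¹(Σ_{k=0}^∞ rᵏ(x) + r⁻¹(y))`, where
`Σ_{k=0}^∞ r^{k-1} = F ∘ r⁻¹` has inverse `F_inv` on `(0,∞)`, is a strict mean on
`(0,∞)`. -/
theorem iterative_mean_of_generator (r r_inv F F_inv : ℝ → ℝ)
    (hr_cont : ContinuousOn r (Set.Ioi 0)) (hr_mono : StrictMonoOn r (Set.Ioi 0))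
    (hr_bij : Set.BijOn r (Set.Ioi 0) (Set.Ioi 0))
    (hr_inv : Set.InvOn r_inv r (Set.Ioi 0) (Set.Ioi 0))
    (hr_lt : ∀ x ∈ Set.Ioi (0 : ℝ), 0 < r x ∧ r x < x)
    (hF_sum : ∀ x ∈ Set.Ioi (0 : ℝ), HasSum (fun k : ℕ => r^[k] x) (F x))
    (hF_cont : ContinuousOn F (Set.Ioi 0))
    (hF_inv : Set.InvOn F_inv (F ∘ r_inv) (Set.Ioi 0) (Set.Ioi 0)) :
    ∀ x ∈ Set.Ioi (0 : ℝ), ∀ y ∈ Set.Ioi (0 : ℝ),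
      (min x y ≤ F_inv (F x + r_inv y) ∧ F_inv (F x + r_inv y) ≤ max x y) ∧
        (x ≠ y → min x y < F_inv (F x + r_inv y) ∧ F_inv (F x + r_inv y) < max x y) := by
  -- iterates stay positive
  have hmaps : ∀ (k : ℕ) (x : ℝ), x ∈ Set.Ioi (0:ℝ) → r^[k] x ∈ Set.Ioi (0:ℝ) := by
    intro k
    induction k with
    | zero => intro x hx; simpa using hx
    | succ n ih =>
      intro x hx
      rw [Function.iterate_succ_apply]
      exact ih _ (Set.mem_Ioi.mpr (hr_lt x hx).1)
  -- iterates are monotone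
  have hiter_mono : ∀ (k : ℕ) (a b : ℝ), a ∈ Set.Ioi (0:ℝ) → b ∈ Set.Ioi (0:ℝ) →
      a ≤ b → r^[k] a ≤ r^[k] b := by
    intro k
    induction k with
    | zero => intro a b _ _ h; simpa using h
    | succ n ih =>
      intro a b ha hb h
      rw [Function.iterate_succ_apply', Function.iterate_succ_apply']
      exact hr_mono.monotoneOn (hmaps n a ha) (hmaps n b hb) (ih a b ha hb h)
  -- F dominates the identity
  have hF_ge : ∀ x ∈ Set.Ioi (0:ℝ), x ≤ F x := by
    intro x hx
    have := le_hasSum (hF_sum x hx) 0 (fun j _ => (Set.mem_Ioi.mp (hmaps j x hx)).le)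
    simpa using this
  -- F is strictly monotone on (0,∞)
  have hF_smono : ∀ a b : ℝ, a ∈ Set.Ioi (0:ℝ) → b ∈ Set.Ioi (0:ℝ) → a < b → F a < F b := by
    intro a b ha hb hab
    exact hasSum_lt (i := 0) (fun k => hiter_mono k a b ha hb hab.le)
      (by simpa using hab) (hF_sum a ha) (hF_sum b hb)
  -- the shift identity F (r z) = F z - z
  have hF_shift : ∀ z ∈ Set.Ioi (0:ℝ), F (r z) = F z - z := by
    intro z hz
    have hx0 : (F z - z) + ∑ i ∈ Finset.range 1, r^[i] z = F z := by simp
    have h2 := (hasSum_nat_add_iff (f := fun m : ℕ => r^[m] z) 1).mpr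
      (hx0 ▸ hF_sum z hz)
    have h1 : HasSum (fun n : ℕ => r^[n] (r z)) (F z - z) := by
      simpa [Function.iterate_succ_apply] using h2
    exact (hF_sum (r z) (Set.mem_Ioi.mpr (hr_lt z hz).1)).unique h1
  -- r_inv maps (0,∞) to itself
  have hrinv_mem : ∀ y ∈ Set.Ioi (0:ℝ), r_inv y ∈ Set.Ioi (0:ℝ) := by
    intro y hy
    obtain ⟨s, hs, hsy⟩ := hr_bij.surjOn hy
    rw [← hsy, hr_inv.1 hs]
    exact hs
  -- r_inv strictly monotone
  have hrinv_smono : ∀ a b : ℝ, a ∈ Set.Ioi (0:ℝ) → b ∈ Set.Ioi (0:ℝ) →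
      a < b → r_inv a < r_inv b := by
    intro a b ha hb hab
    by_contra h
    push_neg at h
    have := hr_mono.monotoneOn (hrinv_mem b hb) (hrinv_mem a ha) h
    rw [hr_inv.2 ha, hr_inv.2 hb] at this
    exact absurd hab (not_lt.mpr this)
  -- G z = F (r_inv z) = r_inv z + F z
  have hG : ∀ z ∈ Set.Ioi (0:ℝ), F (r_inv z) = r_inv z + F z := by
    intro z hz
    have h1 := hF_shift (r_inv z) (hrinv_mem z hz)
    rw [hr_inv.2 hz] at h1
    linarith
  intro x hx y hy
  rcases eq_or_ne x y with rfl | hne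
  · have hval : F_inv (F x + r_inv x) = x := by
      have h := hF_inv.1 hx
      simp only [Function.comp] at h
      rw [show F x + r_inv x = F (r_inv x) from by rw [hG x hx]; ring]
      exact h
    refine ⟨⟨?_, ?_⟩, fun h => absurd rfl h⟩ <;> simp [hval]
  · set lo := min x y with hlo
    set hi := max x y with hhi
    have hlo_mem : lo ∈ Set.Ioi (0:ℝ) := by
      rcases min_cases x y with ⟨h, _⟩ | ⟨h, _⟩ <;> rw [hlo, h]
      exacts [hx, hy]
    have hhi_mem : hi ∈ Set.Ioi (0:ℝ) := by
      rcases max_cases x y with ⟨h, _⟩ | ⟨h, _⟩ <;> rw [hhi, h]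
      exacts [hx, hy]
    have hlohi : lo < hi := min_lt_max.mpr hne
    set t := F x + r_inv y with ht
    -- key inequalities
    have hkey : F (r_inv lo) < t ∧ t < F (r_inv hi) := by
      rw [hG lo hlo_mem, hG hi hhi_mem]
      rcases hne.lt_or_gt with h | h
      · have h1 : lo = x := min_eq_left h.le
        have h2 : hi = y := max_eq_right h.le
        constructor
        · rw [h1, ht]
          have := hrinv_smono x y hx hy h
          linarith
        · rw [h2, ht]
          have := hF_smono x y hx hy h
          have := hrinv_mem y hy
          linarith
      · have h1 : lo = y := min_eq_right h.le
        have h2 : hi = x := max_eq_left h.le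
        constructor
        · rw [h1, ht]
          have := hF_smono y x hy hx h
          linarith
        · rw [h2, ht]
          have := hrinv_smono y x hy hx h
          linarith
    -- intermediate value theorem on F over [r_inv lo, r_inv hi]
    have ha_mem := hrinv_mem lo hlo_mem
    have hb_mem := hrinv_mem hi hhi_mem
    have hab : r_inv lo < r_inv hi := hrinv_smono lo hi hlo_mem hhi_mem hlohi
    have hsub : Set.Icc (r_inv lo) (r_inv hi) ⊆ Set.Ioi (0:ℝ) := fun z hz =>
      lt_of_lt_of_le (Set.mem_Ioi.mp ha_mem) hz.1
    have hivt := intermediate_value_Icc hab.le (hF_cont.mono hsub)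
    obtain ⟨s, hs, hFs⟩ := hivt ⟨hkey.1.le, hkey.2.le⟩
    have hs_mem : s ∈ Set.Ioi (0:ℝ) := hsub hs
    have hs_lt1 : r_inv lo < s := by
      rcases lt_or_eq_of_le hs.1 with h | h
      · exact h
      · exfalso; rw [← h] at hFs; exact absurd hFs.symm hkey.1.ne'
    have hs_lt2 : s < r_inv hi := by
      rcases lt_or_eq_of_le hs.2 with h | h
      · exact h
      · exfalso; rw [h] at hFs; exact absurd hFs hkey.2.ne'
    -- the mean value is r s
    have hrs_mem : r s ∈ Set.Ioi (0:ℝ) := Set.mem_Ioi.mpr (hr_lt s hs_mem).1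
    have hval : F_inv t = r s := by
      have h := hF_inv.1 hrs_mem
      simp only [Function.comp] at h
      rw [hr_inv.1 hs_mem] at h
      rw [← hFs]
      exact h
    have hlo_lt : lo < F_inv t := by
      rw [hval]
      have := hr_mono (hrinv_mem lo hlo_mem) hs_mem hs_lt1
      rwa [hr_inv.2 hlo_mem] at this
    have hhi_gt : F_inv t < hi := by
      rw [hval]
      have := hr_mono hs_mem (hrinv_mem hi hhi_mem) hs_lt2
      rwa [hr_inv.2 hhi_mem] at this
    exact ⟨⟨hlo_lt.le, hhi_gt.le⟩, fun _ => ⟨hlo_lt, hhi_gt⟩⟩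
end

section
/- Let f, g, h : (0,∞) → (0,∞) be continuous, strictly increasing bijections of (0,∞) onto itself. Then the three functions D_{f,g}, D_{g,h}, and D_{f∘g, g∘h} are all means on (0,∞) if and only if g(x) = Σ_{i=0}^∞ h^{-i}(x) for all x > 0, f(x) = Σ_{j=0}^∞ g^{-j}(x) for all x > 0 (i.e. f = Σ_{j=0}^∞ (Σ_{i=0}^∞ h^{-i})^{-j}), and h satisfies the composite functional equation (f∘g)(x) = Σ_{k=0}^∞ (g∘h)^{-k}(x) for all x > 0, i.e. Σ_{j=0}^∞ (Σ_{i=0}^∞ h^{-i})^{-j+1} = Σ_{k=0}^∞ (Σ_{i=0}^∞ h^{-i+1})^{-k}. -/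
open Set

lemma mean_iff_feq (u v u_inv v_inv : ℝ → ℝ)
    (hu_mono : StrictMonoOn u (Set.Ioi 0)) (hu_bij : Set.BijOn u (Set.Ioi 0) (Set.Ioi 0))
    (hv_mono : StrictMonoOn v (Set.Ioi 0)) (hv_bij : Set.BijOn v (Set.Ioi 0) (Set.Ioi 0))
    (hu_inv : Set.InvOn u_inv u (Set.Ioi 0) (Set.Ioi 0))
    (hv_inv : Set.InvOn v_inv v (Set.Ioi 0) (Set.Ioi 0)) :
    (∀ x ∈ Set.Ioi (0:ℝ), ∀ y ∈ Set.Ioi (0:ℝ),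
      min x y ≤ v_inv (u_inv (u x + v y)) ∧ v_inv (u_inv (u x + v y)) ≤ max x y)
    ↔ ∀ x ∈ Set.Ioi (0:ℝ), u (v x) = u x + v x := by
  have huI : ∀ x ∈ Set.Ioi (0:ℝ), u x ∈ Set.Ioi (0:ℝ) := fun x hx => hu_bij.mapsTo hx
  have hvI : ∀ x ∈ Set.Ioi (0:ℝ), v x ∈ Set.Ioi (0:ℝ) := fun x hx => hv_bij.mapsTo hx
  have huinvI : ∀ x ∈ Set.Ioi (0:ℝ), u_inv x ∈ Set.Ioi (0:ℝ) := by
    intro x hx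
    obtain ⟨z, hz, rfl⟩ := hu_bij.surjOn hx
    rwa [hu_inv.1 hz]
  have hvinvI : ∀ x ∈ Set.Ioi (0:ℝ), v_inv x ∈ Set.Ioi (0:ℝ) := by
    intro x hx
    obtain ⟨z, hz, rfl⟩ := hv_bij.surjOn hx
    rwa [hv_inv.1 hz]
  have huinv_mono : ∀ a ∈ Set.Ioi (0:ℝ), ∀ b ∈ Set.Ioi (0:ℝ), a ≤ b → u_inv a ≤ u_inv b := by
    intro a ha b hb hab
    obtain ⟨s, hs, rfl⟩ := hu_bij.surjOn ha
    obtain ⟨t, ht, rfl⟩ := hu_bij.surjOn hb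
    rw [hu_inv.1 hs, hu_inv.1 ht]
    by_contra hlt
    exact absurd (hu_mono ht hs (lt_of_not_ge hlt)) (not_lt.mpr hab)
  have hvinv_mono : ∀ a ∈ Set.Ioi (0:ℝ), ∀ b ∈ Set.Ioi (0:ℝ), a ≤ b → v_inv a ≤ v_inv b := by
    intro a ha b hb hab
    obtain ⟨s, hs, rfl⟩ := hv_bij.surjOn ha
    obtain ⟨t, ht, rfl⟩ := hv_bij.surjOn hb
    rw [hv_inv.1 hs, hv_inv.1 ht]
    by_contra hlt
    exact absurd (hv_mono ht hs (lt_of_not_ge hlt)) (not_lt.mpr hab)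
  constructor
  · intro hmean x hx
    obtain ⟨h1, h2⟩ := hmean x hx x hx
    have hDx : v_inv (u_inv (u x + v x)) = x := le_antisymm (by simpa using h2) (by simpa using h1)
    have hsum : u x + v x ∈ Set.Ioi (0:ℝ) := by
      have h3 := huI x hx; have h4 := hvI x hx
      simp only [Set.mem_Ioi] at *; linarith
    have h3 : v (v_inv (u_inv (u x + v x))) = v x := by rw [hDx]
    rw [hv_inv.2 (huinvI _ hsum)] at h3
    have h4 : u (u_inv (u x + v x)) = u (v x) := by rw [h3]
    rw [hu_inv.2 hsum] at h4
    exact h4.symm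
  · intro hfeq x hx y hy
    have hmin : min x y ∈ Set.Ioi (0:ℝ) := by
      rcases min_choice x y with hc | hc <;> rw [hc] <;> assumption
    have hmax : max x y ∈ Set.Ioi (0:ℝ) := by
      rcases max_choice x y with hc | hc <;> rw [hc] <;> assumption
    have hsum : u x + v y ∈ Set.Ioi (0:ℝ) := by
      have h3 := huI x hx; have h4 := hvI y hy
      simp only [Set.mem_Ioi] at *; linarith
    have hub : u x + v y ≤ u (v (max x y)) := by
      rw [hfeq _ hmax]
      have h1 : u x ≤ u (max x y) := hu_mono.monotoneOn hx hmax (le_max_left x y)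
      have h2 : v y ≤ v (max x y) := hv_mono.monotoneOn hy hmax (le_max_right x y)
      linarith
    have hlb : u (v (min x y)) ≤ u x + v y := by
      rw [hfeq _ hmin]
      have h1 : u (min x y) ≤ u x := hu_mono.monotoneOn hmin hx (min_le_left x y)
      have h2 : v (min x y) ≤ v y := hv_mono.monotoneOn hmin hy (min_le_right x y)
      linarith
    have hvmaxI := hvI _ hmax
    have hvminI := hvI _ hmin
    constructor
    · have h5 := huinv_mono _ (huI _ hvminI) _ hsum hlb
      rw [hu_inv.1 hvminI] at h5
      have h6 := hvinv_mono _ hvminI _ (huinvI _ hsum) h5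
      rwa [hv_inv.1 hmin] at h6
    · have h5 := huinv_mono _ hsum _ (huI _ hvmaxI) hub
      rw [hu_inv.1 hvmaxI] at h5
      have h6 := hvinv_mono _ (huinvI _ hsum) _ hvmaxI h5
      rwa [hv_inv.1 hmax] at h6

lemma feq_iff_hasSum (u v v_inv : ℝ → ℝ)
    (hu_mono : StrictMonoOn u (Set.Ioi 0)) (hu_bij : Set.BijOn u (Set.Ioi 0) (Set.Ioi 0))
    (hv_bij : Set.BijOn v (Set.Ioi 0) (Set.Ioi 0))
    (hv_inv : Set.InvOn v_inv v (Set.Ioi 0) (Set.Ioi 0)) :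
    (∀ x ∈ Set.Ioi (0:ℝ), u (v x) = u x + v x)
    ↔ ∀ x ∈ Set.Ioi (0:ℝ), HasSum (fun n : ℕ => v_inv^[n] x) (u x) := by
  have hvinvI : ∀ x ∈ Set.Ioi (0:ℝ), v_inv x ∈ Set.Ioi (0:ℝ) := by
    intro x hx
    obtain ⟨z, hz, rfl⟩ := hv_bij.surjOn hx
    rwa [hv_inv.1 hz]
  have hiterI : ∀ (x : ℝ), x ∈ Set.Ioi (0:ℝ) → ∀ n : ℕ, v_inv^[n] x ∈ Set.Ioi (0:ℝ) := by
    intro x hx n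
    induction n with
    | zero => simpa
    | succ n ih => rw [Function.iterate_succ_apply']; exact hvinvI _ ih
  constructor
  · intro hfeq x hx
    have hfeq' : ∀ w ∈ Set.Ioi (0:ℝ), u w = u (v_inv w) + w := by
      intro w hw
      have hz := hvinvI w hw
      have h1 := hfeq _ hz
      rwa [hv_inv.2 hw] at h1
    set a : ℕ → ℝ := fun n => v_inv^[n] x with ha
    have haI : ∀ n, a n ∈ Set.Ioi (0:ℝ) := hiterI x hx
    have hstep : ∀ n, u (a n) = u (a (n+1)) + a n := by
      intro n
      have h1 := hfeq' (a n) (haI n)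
      rwa [← Function.iterate_succ_apply' v_inv n x] at h1
    have hS : ∀ N : ℕ, ∑ i ∈ Finset.range N, a i = u x - u (a N) := by
      intro N
      induction N with
      | zero => simp [ha]
      | succ N ih =>
          rw [Finset.sum_range_succ, ih]
          have h1 := hstep N
          linarith
    have hanti' : Antitone (fun n => u (a n)) := by
      apply antitone_nat_of_succ_le
      intro n
      have h1 := hstep n
      have h2 : (0:ℝ) < a n := haI n
      linarith
    have hpos : ∀ n, (0:ℝ) < u (a n) := fun n => hu_bij.mapsTo (haI n)
    have hbdd : BddBelow (Set.range fun n => u (a n)) :=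
      ⟨0, by rintro y ⟨n, rfl⟩; exact (hpos n).le⟩
    set c := ⨅ n, u (a n) with hc
    have htend : Filter.Tendsto (fun n => u (a n)) Filter.atTop (nhds c) :=
      tendsto_atTop_ciInf hanti' hbdd
    have hcle : ∀ n, c ≤ u (a n) := fun n => ciInf_le hbdd n
    have hc0 : 0 ≤ c := le_ciInf fun n => (hpos n).le
    have hato : Filter.Tendsto a Filter.atTop (nhds 0) := by
      have heq : a = fun n => u (a n) - u (a (n+1)) := by
        funext n; have h1 := hstep n; linarith
      rw [heq]
      have h2 : Filter.Tendsto (fun n => u (a (n+1))) Filter.atTop (nhds c) :=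
        htend.comp (Filter.tendsto_add_atTop_nat 1)
      simpa using htend.sub h2
    have hceq : c = 0 := by
      by_contra hne
      have hcpos : 0 < c := lt_of_le_of_ne hc0 (Ne.symm hne)
      obtain ⟨z, hz, hzval⟩ := hu_bij.surjOn (show c/2 ∈ Set.Ioi (0:ℝ) by
        simp only [Set.mem_Ioi]; linarith)
      have hzpos : (0:ℝ) < z := hz
      obtain ⟨N, hN⟩ := Filter.tendsto_atTop'.mp hato (Set.Iio z) (Iio_mem_nhds hzpos)
      have hlt : a N < z := hN N le_rfl
      have h1 : u (a N) < u z := hu_mono (haI N) hz hlt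
      rw [hzval] at h1
      have h2 := hcle N
      linarith
    have hSt : Filter.Tendsto (fun N => ∑ i ∈ Finset.range N, a i)
        Filter.atTop (nhds (u x)) := by
      have heq : (fun N => ∑ i ∈ Finset.range N, a i) = fun N => u x - u (a N) := by
        funext N; exact hS N
      rw [heq]
      have h1 : Filter.Tendsto (fun N => u x - u (a N)) Filter.atTop (nhds (u x - c)) :=
        tendsto_const_nhds.sub htend
      rwa [hceq, sub_zero] at h1
    exact (hasSum_iff_tendsto_nat_of_nonneg (fun n => (haI n).le) _).mpr hSt
  · intro hsum x hx
    have hvx := hv_bij.mapsTo hx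
    have h1 := hsum x hx
    have h2 := hsum (v x) hvx
    have hshift : (fun n : ℕ => v_inv^[n + 1] (v x)) = fun n : ℕ => v_inv^[n] x := by
      funext n
      rw [Function.iterate_succ_apply, hv_inv.1 hx]
    have h3 := (hasSum_nat_add_iff' (f := fun n : ℕ => v_inv^[n] (v x)) 1).mpr h2
    rw [show (∑ i ∈ Finset.range 1, v_inv^[i] (v x)) = v x by simp] at h3
    rw [hshift] at h3
    have h4 := h1.unique h3
    linarith

lemma inv_mapsTo (v v_inv : ℝ → ℝ) (hv_bij : Set.BijOn v (Set.Ioi 0) (Set.Ioi 0))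
    (hv_inv : Set.InvOn v_inv v (Set.Ioi 0) (Set.Ioi 0)) :
    Set.MapsTo v_inv (Set.Ioi 0) (Set.Ioi 0) := by
  intro x hx
  obtain ⟨z, hz, rfl⟩ := hv_bij.surjOn hx
  rwa [hv_inv.1 hz]

lemma mean_iff_hasSum (u v u_inv v_inv : ℝ → ℝ)
    (hu_mono : StrictMonoOn u (Set.Ioi 0)) (hu_bij : Set.BijOn u (Set.Ioi 0) (Set.Ioi 0))
    (hv_mono : StrictMonoOn v (Set.Ioi 0)) (hv_bij : Set.BijOn v (Set.Ioi 0) (Set.Ioi 0))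
    (hu_inv : Set.InvOn u_inv u (Set.Ioi 0) (Set.Ioi 0))
    (hv_inv : Set.InvOn v_inv v (Set.Ioi 0) (Set.Ioi 0)) :
    (∀ x ∈ Set.Ioi (0:ℝ), ∀ y ∈ Set.Ioi (0:ℝ),
      min x y ≤ v_inv (u_inv (u x + v y)) ∧ v_inv (u_inv (u x + v y)) ≤ max x y)
    ↔ ∀ x ∈ Set.Ioi (0:ℝ), HasSum (fun n : ℕ => v_inv^[n] x) (u x) :=
  (mean_iff_feq u v u_inv v_inv hu_mono hu_bij hv_mono hv_bij hu_inv hv_inv).trans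
    (feq_iff_hasSum u v v_inv hu_mono hu_bij hv_bij hv_inv)


/-- Theorem 3: let `f, g, h` be continuous, strictly increasing bijections of `(0,∞)`
onto itself, with inverses `f_inv, g_inv, h_inv` on `(0,∞)`.  Then the three functions
`D_{f,g}(x,y) = g⁻¹(f⁻¹(f x + g y))`, `D_{g,h}(x,y) = h⁻¹(g⁻¹(g x + h y))` and
`D_{f∘g,g∘h}(x,y) = (g∘h)⁻¹((f∘g)⁻¹(f(g x) + g(h y)))` are all means on `(0,∞)` iff
`g = Σ_{i=0}^∞ h⁻ⁱ`, `f = Σ_{j=0}^∞ g⁻ʲ`, and `h` satisfies the composite functional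
equation `f ∘ g = Σ_{k=0}^∞ (g∘h)⁻ᵏ` (series of iterates of `(g∘h)⁻¹ = h⁻¹∘g⁻¹`). -/
theorem three_means_iff (f g h f_inv g_inv h_inv : ℝ → ℝ)
    (hf_cont : ContinuousOn f (Set.Ioi 0)) (hf_mono : StrictMonoOn f (Set.Ioi 0))
    (hf_bij : Set.BijOn f (Set.Ioi 0) (Set.Ioi 0))
    (hg_cont : ContinuousOn g (Set.Ioi 0)) (hg_mono : StrictMonoOn g (Set.Ioi 0))
    (hg_bij : Set.BijOn g (Set.Ioi 0) (Set.Ioi 0))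
    (hh_cont : ContinuousOn h (Set.Ioi 0)) (hh_mono : StrictMonoOn h (Set.Ioi 0))
    (hh_bij : Set.BijOn h (Set.Ioi 0) (Set.Ioi 0))
    (hf_inv : Set.InvOn f_inv f (Set.Ioi 0) (Set.Ioi 0))
    (hg_inv : Set.InvOn g_inv g (Set.Ioi 0) (Set.Ioi 0))
    (hh_inv : Set.InvOn h_inv h (Set.Ioi 0) (Set.Ioi 0)) :
    ((∀ x ∈ Set.Ioi (0 : ℝ), ∀ y ∈ Set.Ioi (0 : ℝ),
        min x y ≤ g_inv (f_inv (f x + g y)) ∧ g_inv (f_inv (f x + g y)) ≤ max x y) ∧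
      (∀ x ∈ Set.Ioi (0 : ℝ), ∀ y ∈ Set.Ioi (0 : ℝ),
        min x y ≤ h_inv (g_inv (g x + h y)) ∧ h_inv (g_inv (g x + h y)) ≤ max x y) ∧
      (∀ x ∈ Set.Ioi (0 : ℝ), ∀ y ∈ Set.Ioi (0 : ℝ),
        min x y ≤ h_inv (g_inv (g_inv (f_inv (f (g x) + g (h y))))) ∧
          h_inv (g_inv (g_inv (f_inv (f (g x) + g (h y))))) ≤ max x y)) ↔
    ((∀ x ∈ Set.Ioi (0 : ℝ), HasSum (fun i : ℕ => h_inv^[i] x) (g x)) ∧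
      (∀ x ∈ Set.Ioi (0 : ℝ), HasSum (fun j : ℕ => g_inv^[j] x) (f x)) ∧
      (∀ x ∈ Set.Ioi (0 : ℝ),
        HasSum (fun k : ℕ => (fun y => h_inv (g_inv y))^[k] x) (f (g x)))) := by
  have e1 := mean_iff_hasSum f g f_inv g_inv hf_mono hf_bij hg_mono hg_bij hf_inv hg_inv
  have e2 := mean_iff_hasSum g h g_inv h_inv hg_mono hg_bij hh_mono hh_bij hg_inv hh_inv
  -- composition facts
  have hfg_mono : StrictMonoOn (fun x => f (g x)) (Set.Ioi 0) :=
    fun a ha b hb hab => hf_mono (hg_bij.mapsTo ha) (hg_bij.mapsTo hb) (hg_mono ha hb hab)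
  have hgh_mono : StrictMonoOn (fun x => g (h x)) (Set.Ioi 0) :=
    fun a ha b hb hab => hg_mono (hh_bij.mapsTo ha) (hh_bij.mapsTo hb) (hh_mono ha hb hab)
  have hfg_bij : Set.BijOn (fun x => f (g x)) (Set.Ioi 0) (Set.Ioi 0) := hf_bij.comp hg_bij
  have hgh_bij : Set.BijOn (fun x => g (h x)) (Set.Ioi 0) (Set.Ioi 0) := hg_bij.comp hh_bij
  have hfg_inv : Set.InvOn (fun y => g_inv (f_inv y)) (fun x => f (g x))
      (Set.Ioi 0) (Set.Ioi 0) := by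
    constructor
    · intro x hx
      simp only
      rw [hf_inv.1 (hg_bij.mapsTo hx), hg_inv.1 hx]
    · intro y hy
      simp only
      rw [hg_inv.2 (inv_mapsTo f f_inv hf_bij hf_inv hy), hf_inv.2 hy]
  have hgh_inv : Set.InvOn (fun y => h_inv (g_inv y)) (fun x => g (h x))
      (Set.Ioi 0) (Set.Ioi 0) := by
    constructor
    · intro x hx
      simp only
      rw [hg_inv.1 (hh_bij.mapsTo hx), hh_inv.1 hx]
    · intro y hy
      simp only
      rw [hh_inv.2 (inv_mapsTo g g_inv hg_bij hg_inv hy), hg_inv.2 hy]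
  have e3 := mean_iff_hasSum (fun x => f (g x)) (fun x => g (h x))
    (fun y => g_inv (f_inv y)) (fun y => h_inv (g_inv y))
    hfg_mono hfg_bij hgh_mono hgh_bij hfg_inv hgh_inv
  constructor
  · rintro ⟨m1, m2, m3⟩
    exact ⟨e2.mp m2, e1.mp m1, e3.mp m3⟩
  · rintro ⟨s1, s2, s3⟩
    exact ⟨e1.mpr s2, e2.mpr s1, e3.mpr s3⟩
end

section
/- Fix w ∈ (0,1) and define M, N, K : (0,∞)² → (0,∞) by M(x,y) = (1−w)x + w·y, N(x,y) = w·x + (1−w)y, and K(x,y) = w(1−w)(x+y). Then K is invariant with respect to the mapping (M,N), i.e. K(M(x,y), N(x,y)) = K(x,y) for all x, y > 0, but K is not a mean on (0,∞) for any w ∈ (0,1). -/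
/-- Example 3, conclusion: fix `w ∈ (0,1)` and let `M(x,y) = (1-w)x + w·y`,
`N(x,y) = w·x + (1-w)y`, `K(x,y) = w(1-w)(x+y)` on `(0,∞)²`.  Then `K` is invariant
with respect to the mapping `(M, N)`, i.e. `K(M(x,y), N(x,y)) = K(x,y)` for all
`x, y > 0`, but `K` is not a mean on `(0,∞)`. -/
theorem invariant_but_not_mean (w : ℝ) (hw : w ∈ Set.Ioo (0 : ℝ) 1)
    (M N K : ℝ → ℝ → ℝ)
    (hM : ∀ x y : ℝ, M x y = (1 - w) * x + w * y)
    (hN : ∀ x y : ℝ, N x y = w * x + (1 - w) * y)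
    (hK : ∀ x y : ℝ, K x y = w * (1 - w) * (x + y)) :
    (∀ x ∈ Set.Ioi (0 : ℝ), ∀ y ∈ Set.Ioi (0 : ℝ),
        K (M x y) (N x y) = K x y) ∧
      ¬ (∀ x ∈ Set.Ioi (0 : ℝ), ∀ y ∈ Set.Ioi (0 : ℝ),
          min x y ≤ K x y ∧ K x y ≤ max x y) := by
  obtain ⟨hw0, hw1⟩ := hw
  constructor
  · intro x _ y _
    rw [hK, hK, hM, hN]; ring
  · intro h
    have := (h 1 (by norm_num) 1 (by norm_num)).1
    rw [hK] at this
    simp only [min_self] at this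
    nlinarith [sq_nonneg (2 * w - 1)]
end

section
/- There do not exist strictly increasing bijections f, g, h : [0,∞) → [0,∞) with f(0) = g(0) = h(0) = 0, each differentiable at 0, satisfying f(g(x)) = f(x) + g(x), g(h(x)) = g(x) + h(x), and f(g(g(h(x)))) = f(g(x)) + g(h(x)) for all x ≥ 0. -/
/-- Remark 7: there do not exist strictly increasing bijections
`f, g, h : [0,∞) → [0,∞)` with `f 0 = g 0 = h 0 = 0`, each differentiable at `0`,
satisfying `f (g x) = f x + g x`, `g (h x) = g x + h x` and
`f (g (g (h x))) = f (g x) + g (h x)` for all `x ≥ 0`. -/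
theorem no_three_reflexive_maps :
    ¬ ∃ (f g h : ℝ → ℝ) (a b c : ℝ),
        StrictMonoOn f (Set.Ici 0) ∧ Set.BijOn f (Set.Ici 0) (Set.Ici 0) ∧
          f 0 = 0 ∧ HasDerivWithinAt f a (Set.Ici 0) 0 ∧
        StrictMonoOn g (Set.Ici 0) ∧ Set.BijOn g (Set.Ici 0) (Set.Ici 0) ∧
          g 0 = 0 ∧ HasDerivWithinAt g b (Set.Ici 0) 0 ∧
        StrictMonoOn h (Set.Ici 0) ∧ Set.BijOn h (Set.Ici 0) (Set.Ici 0) ∧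
          h 0 = 0 ∧ HasDerivWithinAt h c (Set.Ici 0) 0 ∧
        (∀ x ∈ Set.Ici (0 : ℝ), f (g x) = f x + g x) ∧
        (∀ x ∈ Set.Ici (0 : ℝ), g (h x) = g x + h x) ∧
        (∀ x ∈ Set.Ici (0 : ℝ), f (g (g (h x))) = f (g x) + g (h x)) := by
  rintro ⟨f, g, h, a, b, c, hfm, hfb, hf0, hfd, hgm, hgb, hg0, hgd,
    hhm, hhb, hh0, hhd, e1, e2, e3⟩
  have hgmap : Set.MapsTo g (Set.Ici 0) (Set.Ici 0) := hgb.mapsTo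
  have hhmap : Set.MapsTo h (Set.Ici 0) (Set.Ici 0) := hhb.mapsTo
  have h0mem : (0:ℝ) ∈ Set.Ici (0:ℝ) := Set.self_mem_Ici
  have udw : UniqueDiffWithinAt ℝ (Set.Ici (0:ℝ)) 0 := uniqueDiffOn_Ici 0 0 h0mem
  -- g x > x for x > 0
  have hgx : ∀ x : ℝ, 0 < x → x < g x := by
    intro x hx
    have hxm : x ∈ Set.Ici (0:ℝ) := le_of_lt hx
    have hgxm : g x ∈ Set.Ici (0:ℝ) := hgmap hxm
    have hgpos : 0 < g x := by
      have := hgm h0mem hxm hx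
      rwa [hg0] at this
    have : f x < f (g x) := by
      rw [e1 x hxm]; linarith
    exact (hfm.lt_iff_lt hxm hgxm).mp this
  -- b ≥ 1
  have hb1 : 1 ≤ b := by
    have hslope := hasDerivWithinAt_iff_tendsto_slope.1 hgd
    have hset : Set.Ici (0:ℝ) \ {0} = Set.Ioi 0 := by
      ext x
      simp only [Set.mem_diff, Set.mem_Ici, Set.mem_singleton_iff, Set.mem_Ioi]
      constructor
      · rintro ⟨h1, h2⟩; exact lt_of_le_of_ne h1 (Ne.symm h2)
      · intro h1; exact ⟨le_of_lt h1, ne_of_gt h1⟩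
    rw [hset] at hslope
    refine ge_of_tendsto hslope ?_
    filter_upwards [self_mem_nhdsWithin] with x hx
    have hx0 : 0 < x := hx
    have hgxx := hgx x hx0
    rw [slope_def_field, hg0, sub_zero, sub_zero, le_div_iff₀ hx0]
    linarith
  -- chain rule derivatives
  have hfd0 : HasDerivWithinAt f a (Set.Ici 0) (g 0) := by rwa [hg0]
  have hgd0 : HasDerivWithinAt g b (Set.Ici 0) (h 0) := by rwa [hh0]
  have hgd0' : HasDerivWithinAt g b (Set.Ici 0) (g (h 0)) := by rwa [hh0, hg0]
  have hfd0' : HasDerivWithinAt f a (Set.Ici 0) (g (g (h 0))) := by rwa [hh0, hg0, hg0]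
  have D1 : HasDerivWithinAt (fun x => f (g x)) (a * b) (Set.Ici 0) 0 :=
    hfd0.comp 0 hgd hgmap
  have G1 : HasDerivWithinAt (fun x => g (h x)) (b * c) (Set.Ici 0) 0 :=
    hgd0.comp 0 hhd hhmap
  have G2 : HasDerivWithinAt (fun x => g (g (h x))) (b * (b * c)) (Set.Ici 0) 0 :=
    hgd0'.comp 0 G1 (hgmap.comp hhmap)
  have D3 : HasDerivWithinAt (fun x => f (g (g (h x)))) (a * (b * (b * c))) (Set.Ici 0) 0 :=
    hfd0'.comp 0 G2 (hgmap.comp (hgmap.comp hhmap))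
  -- equate via the functional equations
  have E1 : a * b = a + b := by
    have D1' : HasDerivWithinAt (fun x => f x + g x) (a * b) (Set.Ici 0) 0 :=
      D1.congr (fun y hy => (e1 y hy).symm) ((e1 0 h0mem).symm)
    have D1'' : HasDerivWithinAt (fun x => f x + g x) (a + b) (Set.Ici 0) 0 := hfd.add hgd
    rw [← D1'.derivWithin udw, ← D1''.derivWithin udw]
  have E2 : b * c = b + c := by
    have G1' : HasDerivWithinAt (fun x => g x + h x) (b * c) (Set.Ici 0) 0 :=
      G1.congr (fun y hy => (e2 y hy).symm) ((e2 0 h0mem).symm)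
    have G1'' : HasDerivWithinAt (fun x => g x + h x) (b + c) (Set.Ici 0) 0 := hgd.add hhd
    rw [← G1'.derivWithin udw, ← G1''.derivWithin udw]
  have E3 : a * (b * (b * c)) = a * b + b * c := by
    have D3' : HasDerivWithinAt (fun x => f (g x) + g (h x)) (a * (b * (b * c)))
        (Set.Ici 0) 0 := D3.congr (fun y hy => (e3 y hy).symm) ((e3 0 h0mem).symm)
    have D3'' : HasDerivWithinAt (fun x => f (g x) + g (h x)) (a * b + b * c)
        (Set.Ici 0) 0 := D1.add G1
    rw [← D3'.derivWithin udw, ← D3''.derivWithin udw]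
  -- arithmetic contradiction
  have hbne : b ≠ 1 := by
    intro hb; rw [hb] at E1; linarith
  have hb : 1 < b := lt_of_le_of_ne hb1 (Ne.symm hbne)
  have ha : 1 < a := by nlinarith
  have hc : 1 < c := by nlinarith
  nlinarith [mul_pos (sub_pos.2 ha) (sub_pos.2 hb), mul_pos (sub_pos.2 hb) (sub_pos.2 hc),
    mul_pos (mul_pos (sub_pos.2 ha) (sub_pos.2 hb)) (mul_pos (sub_pos.2 hb) (sub_pos.2 hc))]
end

section
/- Let (Y, ⊕) be a medial groupoid, i.e. ⊕ : Y × Y → Y satisfies (u ⊕ v) ⊕ (w ⊕ z) = (u ⊕ w) ⊕ (v ⊕ z) for all u, v, w, z ∈ Y. Let X ⊆ Y and let ⋄ be an operation assigning to functions u, v : X → Y a function u ⋄ v : X → Y. Let f, g, h : X → Y be such that each of the pairs (f,g), (g,h), (f⋄g, g⋄h) satisfies: the combined function (u ⋄ v) is injective with range equal to {u(x) ⊕ v(y) : x, y ∈ X}, so that A_{u,v}(x,y) := (u⋄v)⁻¹(u(x) ⊕ v(y)) is a well-defined map X² → X. If A_{f,g} and A_{g,h} are reflexive (i.e. A_{f,g}(x,x)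 = x and A_{g,h}(x,x) = x for all x ∈ X, equivalently (f⋄g)(x) = f(x) ⊕ g(x) and (g⋄h)(x) = g(x) ⊕ h(x)), then A_{f⋄g, g⋄h}(A_{f,g}(x,y), A_{g,h}(x,y)) = A_{f⋄g, g⋄h}(x,y) for all x, y ∈ X. -/
/-- Remark 8 (extension of Theorem 1): let `(Y, ⊕)` be a medial groupoid, `X` a subset
of `Y` (modelled as a type with functions into `Y`), and `⋄` an operation on functions
`X → Y`.  Let `f, g, h : X → Y` be such that for each of the pairs `(f,g)`, `(g,h)`,
`(f⋄g, g⋄h)` the function `u ⋄ v` is injective and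
`A_{u,v}(x,y) = (u⋄v)⁻¹(u x ⊕ v y)` is a well-defined map `X² → X`, characterized by
`(u⋄v)(A_{u,v}(x,y)) = u x ⊕ v y`.  If `A_{f,g}` and `A_{g,h}` are reflexive, then
`A_{f⋄g, g⋄h} ∘ (A_{f,g}, A_{g,h}) = A_{f⋄g, g⋄h}`. -/
theorem invariance_identity_extension {X Y : Type*} (op : Y → Y → Y)
    (hmedial : ∀ u v w z : Y, op (op u v) (op w z) = op (op u w) (op v z))
    (diamond : (X → Y) → (X → Y) → (X → Y))
    (f g h : X → Y)
    (hfg_inj : Function.Injective (diamond f g))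
    (hgh_inj : Function.Injective (diamond g h))
    (hK_inj : Function.Injective (diamond (diamond f g) (diamond g h)))
    (A_fg A_gh A_K : X → X → X)
    (hA_fg : ∀ x y : X, diamond f g (A_fg x y) = op (f x) (g y))
    (hA_gh : ∀ x y : X, diamond g h (A_gh x y) = op (g x) (h y))
    (hA_K : ∀ x y : X,
      diamond (diamond f g) (diamond g h) (A_K x y)
        = op (diamond f g x) (diamond g h y))
    (hfg_refl : ∀ x : X, A_fg x x = x)
    (hgh_refl : ∀ x : X, A_gh x x = x) :
    ∀ x y : X, A_K (A_fg x y) (A_gh x y) = A_K x y := by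
  intro x y
  apply hK_inj
  rw [hA_K, hA_K, hA_fg, hA_gh, hmedial]
  have e1 : diamond f g x = op (f x) (g x) := by rw [← hfg_refl x, hA_fg, hfg_refl]
  have e2 : diamond g h y = op (g y) (h y) := by rw [← hgh_refl y, hA_gh, hgh_refl]
  rw [e1, e2]
end
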